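/- (Corollary to Theorem 2) Let K, M be origin-symmetric convex bodies in ℝⁿ, p > 0, and f a non-negative continuous function on ℝⁿ. If ∫_K |⟨x,ξ⟩|^p dx ≤ ∫_M |⟨x,ξ⟩|^p f(x) dx for all ξ ∈ S^{n−1}, then |K|^{(n+p)/n} ≤ ((n+p)/n) · d_ovr(M, L_p^n)^p · |M|^{p/n} · ∫_M f. -/

import Mathlib

/-!
Let `D ⊇ M` be an `L_p`-ball with representing measure `ν`. Integrating the moment inequality
against `ν` (Tonelli) gives `∫_K ‖x‖_D^p ≤ ∫_M ‖x‖_D^p f ≤ ∫_M f`, since `‖·‖_D ≤ 1` on `M`.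
On the other hand `|K ∩ {‖x‖_D ≥ t}| ≥ |K| - t^n |D|`, so the layer cake formula gives
`∫_K ‖x‖_D^p ≥ |K| s^p - p/(n+p) |D| s^{n+p}` for every `s ≥ 0`, and `s^n = |K|/|D|` yields
`∫_K ‖x‖_D^p ≥ n/(n+p) |K|^{(n+p)/n} |D|^{-p/n}`. Euclidean balls are `L_p`-balls, so the
infimum defining `d_ovr` is over a nonempty set, and the bound passes to it by continuity.
-/

open MeasureTheory Set Metric
open scoped ENNReal RealInnerProductSpace NNReal Pointwise

noncomputable section

abbrev E (n : ℕ) := EuclideanSpace ℝ (Fin n)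

/-- A star body: compact, origin in the interior, star-shaped with respect to the
origin, and with continuous Minkowski functional (gauge). -/
def IsStarBody {n : ℕ} (K : Set (E n)) : Prop :=
  IsCompact K ∧ 0 ∈ interior K ∧
    (∀ x ∈ K, ∀ t : ℝ, 0 ≤ t → t ≤ 1 → t • x ∈ K) ∧ Continuous (gauge K)

/-- An origin-symmetric convex body. -/
def IsSymmetricConvexBody {n : ℕ} (K : Set (E n)) : Prop :=
  IsCompact K ∧ Convex ℝ K ∧ 0 ∈ interior K ∧ ∀ x ∈ K, -x ∈ K


/-- D is the unit ball of an n-dimensional subspace of L_p: its gauge to the p-th power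
is given by integration of |<x,th>|^p against a finite Borel measure on the sphere. -/
def IsLpBall (n : ℕ) (p : ℝ) (D : Set (E n)) : Prop :=
  IsSymmetricConvexBody D ∧
    ∃ ν : Measure (sphere (0 : E n) 1), IsFiniteMeasure ν ∧
      ∀ x : E n, gauge D x ^ p = ∫ θ : sphere (0 : E n) 1, |⟪x, (θ : E n)⟫| ^ p ∂ν

/-- Outer volume ratio distance from M to the class of unit balls of subspaces of L_p. -/
def dovrLp (n : ℕ) (p : ℝ) (M : Set (E n)) : ℝ :=
  sInf {r | ∃ D : Set (E n), M ⊆ D ∧ IsLpBall n p D ∧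
    r = ((volume D).toReal / (volume M).toReal) ^ ((1 : ℝ) / n)}


open Filter Topology Module
open scoped Interval

theorem integral_sub_mul_rpow_mul_rpow (a b : ℝ) {p q s : ℝ} (hp : 0 < p) (hq : 0 ≤ q)
    (hs : 0 ≤ s) :
    ∫ t in 0..s, (a - b * t ^ q) * t ^ (p - 1) = a * s ^ p / p - b * s ^ (q + p) / (q + p) := by
  have hsplit : ∀ᵐ t, t ∈ Ι 0 s →
      (a - b * t ^ q) * t ^ (p - 1) = a * t ^ (p - 1) - b * t ^ (q + p - 1) := by
    refine Eventually.of_forall fun t ht => ?_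
    rw [uIoc_of_le hs] at ht
    rw [sub_mul, mul_assoc, ← Real.rpow_add ht.1]
    ring_nf
  rw [intervalIntegral.integral_congr_ae hsplit, intervalIntegral.integral_sub,
    intervalIntegral.integral_const_mul, intervalIntegral.integral_const_mul,
    integral_rpow (Or.inl (by linarith)), integral_rpow (Or.inl (by linarith))]
  · simp only [sub_add_cancel, Real.zero_rpow hp.ne', Real.zero_rpow (by linarith : q + p ≠ 0)]
    ring
  · exact (intervalIntegral.intervalIntegrable_rpow' (by linarith)).const_mul _
  · exact (intervalIntegral.intervalIntegrable_rpow' (by linarith)).const_mul _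

theorem ofReal_integral_le_lintegral_ofReal {α : Type*} [MeasurableSpace α] {μ : Measure α}
    {f : α → ℝ} (hf : Integrable f μ) :
    ENNReal.ofReal (∫ a, f a ∂μ) ≤ ∫⁻ a, ENNReal.ofReal (f a) ∂μ := by
  rw [integral_eq_lintegral_pos_part_sub_lintegral_neg_part hf]
  exact (ENNReal.ofReal_le_ofReal (sub_le_self _ ENNReal.toReal_nonneg)).trans
    ENNReal.ofReal_toReal_le

theorem rpow_le_of_forall_sub_le {a b d p I : ℝ} (ha : 0 ≤ a) (hb : 0 < b) (hd : 0 < d)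
    (hp : 0 < p) (h : ∀ s : ℝ, 0 ≤ s → a * s ^ p - p / (d + p) * b * s ^ (d + p) ≤ I) :
    a ^ ((d + p) / d) ≤ (d + p) / d * b ^ (p / d) * I := by
  -- the optimal choice, `b * s ^ d = a`
  set s := (a / b) ^ (1 / d)
  have hs : 0 ≤ s := by positivity
  have hsd : b * s ^ d = a := by
    rw [← Real.rpow_mul (by positivity), one_div_mul_cancel hd.ne', Real.rpow_one]
    field_simp
  have hsp : a * s ^ p * b ^ (p / d) = a ^ ((d + p) / d) := by
    rw [← Real.rpow_mul (by positivity), one_div_mul_eq_div, Real.div_rpow ha hb.le,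
      add_div, div_self hd.ne', Real.rpow_add' ha (by positivity), Real.rpow_one]
    field_simp
  have hopt : a * s ^ p - p / (d + p) * b * s ^ (d + p) = d / (d + p) * (a * s ^ p) := by
    rw [Real.rpow_add' hs (by positivity), ← hsd]
    field_simp
    ring
  calc a ^ ((d + p) / d) = (d + p) / d * b ^ (p / d) * (d / (d + p) * (a * s ^ p)) := by
        rw [← hsp]
        field_simp
    _ ≤ (d + p) / d * b ^ (p / d) * I := by
        gcongr
        exact hopt ▸ h s hs

theorem le_apply_csInf_of_forall_le {S : Set ℝ} {a : ℝ} {φ : ℝ → ℝ} (hφ : Continuous φ)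
    (hne : S.Nonempty) (hbdd : BddBelow S) (h : ∀ r ∈ S, a ≤ φ r) : a ≤ φ (sInf S) :=
  closure_minimal h (isClosed_le continuous_const hφ) (csInf_mem_closure hne hbdd)

section Gauge

variable {V : Type*} [NormedAddCommGroup V] [NormedSpace ℝ V]

theorem mem_smul_of_gauge_lt {D : Set V} (hDc : Convex ℝ D) (hD0 : D ∈ 𝓝 0) {t : ℝ}
    (ht : 0 < t) {x : V} (hx : gauge D x < t) : x ∈ t • D := by
  have h : gauge D (t⁻¹ • x) < 1 := by
    rw [gauge_smul_of_nonneg (inv_nonneg.2 ht.le), smul_eq_mul, inv_mul_lt_one₀ ht]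
    exact hx
  exact (mem_smul_set_iff_inv_smul_mem₀ ht.ne' _ _).2
    (interior_subset ((gauge_lt_one_iff_mem_interior hDc hD0).1 h))

variable [MeasurableSpace V] [BorelSpace V] [FiniteDimensional ℝ V] (μ : Measure V)
  [μ.IsAddHaarMeasure]

theorem measure_le_measure_inter_le_gauge_add {K D : Set V} (hDc : Convex ℝ D)
    (hD0 : D ∈ 𝓝 0) {t : ℝ} (ht : 0 < t) :
    μ K ≤ μ (K ∩ {x | t ≤ gauge D x}) + ENNReal.ofReal (t ^ finrank ℝ V) * μ D := by
  have hK : K ⊆ (K ∩ {x | t ≤ gauge D x}) ∪ t • D := fun x hx =>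
    (le_or_gt t (gauge D x)).imp (fun h => ⟨hx, h⟩) (mem_smul_of_gauge_lt hDc hD0 ht)
  calc μ K ≤ μ (K ∩ {x | t ≤ gauge D x}) + μ (t • D) :=
        (measure_mono hK).trans (measure_union_le _ _)
    _ = _ := by rw [Measure.addHaar_smul, abs_of_pos (pow_pos ht _)]

theorem ofReal_le_lintegral_gauge_rpow {K D : Set V} (hDc : Convex ℝ D) (hD0 : D ∈ 𝓝 0)
    (hD : μ D ≠ ∞) {p s : ℝ} (hp : 0 < p) (hs : 0 ≤ s) :
    ENNReal.ofReal ((μ K).toReal * s ^ p -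
        p / ((finrank ℝ V : ℝ) + p) * (μ D).toReal * s ^ ((finrank ℝ V : ℝ) + p)) ≤
      ∫⁻ x in K, ENNReal.ofReal (gauge D x ^ p) ∂μ := by
  have hcont : Continuous (gauge D) := continuous_gauge hDc hD0
  set φ : ℝ → ℝ := fun t => ((μ K).toReal - (μ D).toReal * t ^ (finrank ℝ V : ℝ)) * t ^ (p - 1)
    with hφ
  have hint : IntervalIntegrable φ volume 0 s :=
    (intervalIntegral.intervalIntegrable_rpow' (by linarith)).continuousOn_mul
      (continuousOn_const.sub (continuousOn_const.mul
        (Real.continuous_rpow_const (Nat.cast_nonneg _)).continuousOn))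
  have htail : ∀ t ∈ Ioc 0 s, ENNReal.ofReal (φ t)
      ≤ μ.restrict K {x | t ≤ gauge D x} * ENNReal.ofReal (t ^ (p - 1)) := by
    rintro t ⟨ht, -⟩
    rw [hφ, ENNReal.ofReal_mul' (Real.rpow_nonneg ht.le _)]
    gcongr
    rw [ENNReal.ofReal_sub _ (by positivity), tsub_le_iff_right,
      Measure.restrict_apply (measurableSet_le measurable_const hcont.measurable), inter_comm,
      Real.rpow_natCast, mul_comm, ENNReal.ofReal_mul (by positivity), ENNReal.ofReal_toReal hD]
    exact ENNReal.ofReal_toReal_le.trans (measure_le_measure_inter_le_gauge_add μ hDc hD0 ht)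
  calc _ = ENNReal.ofReal p * ENNReal.ofReal (∫ t in Ioc 0 s, φ t) := by
        rw [← ENNReal.ofReal_mul hp.le, ← intervalIntegral.integral_of_le hs, hφ,
          integral_sub_mul_rpow_mul_rpow _ _ hp (Nat.cast_nonneg _) hs]
        congr 1
        field_simp
    _ ≤ ENNReal.ofReal p * ∫⁻ t in Ioc 0 s, ENNReal.ofReal (φ t) := by
        gcongr
        exact ofReal_integral_le_lintegral_ofReal hint.1
    _ ≤ ENNReal.ofReal p * ∫⁻ t in Ioi 0,
        μ.restrict K {x | t ≤ gauge D x} * ENNReal.ofReal (t ^ (p - 1)) := by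
        gcongr ENNReal.ofReal p * ?_
        exact (setLIntegral_mono' measurableSet_Ioc htail).trans
          (lintegral_mono_set Ioc_subset_Ioi_self)
    _ = _ := (lintegral_rpow_eq_lintegral_meas_le_mul _
        (Eventually.of_forall fun x => gauge_nonneg x) hcont.aemeasurable hp).symm

end Gauge

section Moments

variable {F : Type*} [NormedAddCommGroup F] [InnerProductSpace ℝ F]

theorem continuous_abs_inner_rpow {p : ℝ} (hp : 0 ≤ p) :
    Continuous fun q : F × F => |⟪q.1, q.2⟫| ^ p :=
  (Real.continuous_rpow_const hp).comp (continuous_fst.inner continuous_snd).abs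

variable [FiniteDimensional ℝ F] [MeasurableSpace F] [BorelSpace F]

theorem lintegral_gauge_rpow_le_of_moment_le {μ : Measure F} [IsFiniteMeasureOnCompacts μ]
    [SFinite μ] {p : ℝ} (hp : 0 ≤ p) {K M D : Set F} {f : F → ℝ} (hK : IsCompact K)
    (hM : IsCompact M) (hMD : M ⊆ D) (hf : Continuous f) (hf0 : ∀ x, 0 ≤ f x)
    {ν : Measure (sphere (0 : F) 1)} [IsFiniteMeasure ν]
    (hD : ∀ x, gauge D x ^ p = ∫ θ : sphere (0 : F) 1, |⟪x, (θ : F)⟫| ^ p ∂ν)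
    (hcomp : ∀ ξ : F, ‖ξ‖ = 1 →
      ∫ x in K, |⟪x, ξ⟫| ^ p ∂μ ≤ ∫ x in M, |⟪x, ξ⟫| ^ p * f x ∂μ) :
    ∫⁻ x in K, ENNReal.ofReal (gauge D x ^ p) ∂μ ≤ ENNReal.ofReal (∫ x in M, f x ∂μ) := by
  set G : F → sphere (0 : F) 1 → ℝ≥0∞ := fun x θ => ENNReal.ofReal (|⟪x, (θ : F)⟫| ^ p)
  have hGc : Continuous fun q : F × sphere (0 : F) 1 => |⟪q.1, (q.2 : F)⟫| ^ p :=
    (continuous_abs_inner_rpow hp).comp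
      (continuous_fst.prodMk (continuous_subtype_val.comp continuous_snd))
  have hGm : Measurable (Function.uncurry G) := hGc.measurable.ennreal_ofReal
  have hGfm : Measurable fun q : F × sphere (0 : F) 1 => G q.1 q.2 * ENNReal.ofReal (f q.1) :=
    hGm.mul (hf.measurable.ennreal_ofReal.comp measurable_fst)
  have hGx : ∀ x, Measurable (G x) := fun x => hGm.comp measurable_prodMk_left
  have hgauge : ∀ x, ENNReal.ofReal (gauge D x ^ p) = ∫⁻ θ, G x θ ∂ν := fun x => by
    rw [hD x]
    refine ofReal_integral_eq_lintegral_ofReal ?_ (Eventually.of_forall fun θ => by positivity)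
    exact integrableOn_univ.1
      ((hGc.comp (Continuous.prodMk_right x)).continuousOn.integrableOn_compact isCompact_univ)
  have hmoment : ∀ θ : sphere (0 : F) 1,
      ∫⁻ x in K, G x θ ∂μ ≤ ∫⁻ x in M, G x θ * ENNReal.ofReal (f x) ∂μ := fun θ => by
    have hc : Continuous fun x : F => |⟪x, (θ : F)⟫| ^ p := hGc.comp (Continuous.prodMk_left θ)
    have hcf : Continuous fun x : F => |⟪x, (θ : F)⟫| ^ p * f x := hc.mul hf
    calc ∫⁻ x in K, G x θ ∂μ = ENNReal.ofReal (∫ x in K, |⟪x, (θ : F)⟫| ^ p ∂μ) :=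
          (ofReal_integral_eq_lintegral_ofReal (hc.continuousOn.integrableOn_compact hK)
            (Eventually.of_forall fun x => by positivity)).symm
      _ ≤ ENNReal.ofReal (∫ x in M, |⟪x, (θ : F)⟫| ^ p * f x ∂μ) :=
          ENNReal.ofReal_le_ofReal (hcomp θ (mem_sphere_zero_iff_norm.1 θ.2))
      _ = ∫⁻ x in M, G x θ * ENNReal.ofReal (f x) ∂μ := by
          rw [ofReal_integral_eq_lintegral_ofReal
            (hcf.continuousOn.integrableOn_compact hM)
            (Eventually.of_forall fun x => mul_nonneg (by positivity) (hf0 x))]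
          exact lintegral_congr fun x => ENNReal.ofReal_mul (by positivity)
  have hgauge_le : ∀ x ∈ M, ENNReal.ofReal (gauge D x ^ p) ≤ 1 := fun x hx =>
    ENNReal.ofReal_le_one.2 (Real.rpow_le_one (gauge_nonneg x) (gauge_le_one_of_mem (hMD hx)) hp)
  calc ∫⁻ x in K, ENNReal.ofReal (gauge D x ^ p) ∂μ = ∫⁻ x in K, ∫⁻ θ, G x θ ∂ν ∂μ :=
        lintegral_congr fun x => hgauge x
    _ = ∫⁻ θ, ∫⁻ x in K, G x θ ∂μ ∂ν := lintegral_lintegral_swap hGm.aemeasurable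
    _ ≤ ∫⁻ θ, ∫⁻ x in M, G x θ * ENNReal.ofReal (f x) ∂μ ∂ν := lintegral_mono hmoment
    _ = ∫⁻ x in M, ∫⁻ θ, G x θ * ENNReal.ofReal (f x) ∂ν ∂μ :=
        (lintegral_lintegral_swap hGfm.aemeasurable).symm
    _ = ∫⁻ x in M, ENNReal.ofReal (gauge D x ^ p) * ENNReal.ofReal (f x) ∂μ :=
        lintegral_congr fun x => by
          rw [lintegral_mul_const _ (hGx x), hgauge]
    _ ≤ ∫⁻ x in M, ENNReal.ofReal (f x) ∂μ :=
        setLIntegral_mono' hM.measurableSet fun x hx =>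
          mul_le_of_le_one_left zero_le (hgauge_le x hx)
    _ = ENNReal.ofReal (∫ x in M, f x ∂μ) :=
        (ofReal_integral_eq_lintegral_ofReal (hf.continuousOn.integrableOn_compact hM)
          (Eventually.of_forall hf0)).symm

theorem integral_closedBall_abs_inner_rpow_eq_of_norm_eq (p : ℝ) {u v : F} (h : ‖u‖ = ‖v‖) :
    ∫ y in closedBall (0 : F) 1, |⟪u, y⟫| ^ p = ∫ y in closedBall (0 : F) 1, |⟪v, y⟫| ^ p := by
  set O := (ℝ ∙ (u - v))ᗮ.reflection
  have hpre : O ⁻¹' closedBall 0 1 = closedBall 0 1 := by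
    ext y
    simp [O]
  calc ∫ y in closedBall (0 : F) 1, |⟪u, y⟫| ^ p
      = ∫ y in O ⁻¹' closedBall 0 1, |⟪O u, O y⟫| ^ p := by
        simp only [hpre, LinearIsometryEquiv.inner_map_map]
    _ = ∫ y in closedBall (0 : F) 1, |⟪O u, y⟫| ^ p :=
        O.measurePreserving.setIntegral_preimage_emb O.toHomeomorph.measurableEmbedding
          (fun y => |⟪O u, y⟫| ^ p) _
    _ = ∫ y in closedBall (0 : F) 1, |⟪v, y⟫| ^ p := by rw [Submodule.reflection_sub h]

theorem integral_closedBall_abs_inner_rpow (p : ℝ) {e : F} (he : ‖e‖ = 1) (x : F) :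
    ∫ y in closedBall (0 : F) 1, |⟪x, y⟫| ^ p =
      ‖x‖ ^ p * ∫ y in closedBall (0 : F) 1, |⟪e, y⟫| ^ p := by
  have hxe : ‖x‖ = ‖‖x‖ • e‖ := by rw [norm_smul, he, norm_norm, mul_one]
  rw [integral_closedBall_abs_inner_rpow_eq_of_norm_eq p hxe, ← integral_const_mul]
  simp only [real_inner_smul_left, abs_mul, abs_norm, Real.mul_rpow (norm_nonneg x) (abs_nonneg _)]

theorem integral_closedBall_abs_inner_rpow_pos {p : ℝ} (hp : 0 ≤ p) {e : F} (he : ‖e‖ = 1) :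
    0 < ∫ y in closedBall (0 : F) 1, |⟪e, y⟫| ^ p := by
  have hc : Continuous fun y : F => |⟪e, y⟫| ^ p :=
    (continuous_abs_inner_rpow hp).comp (Continuous.prodMk_right e)
  rw [setIntegral_pos_iff_support_of_nonneg_ae (Eventually.of_forall fun y => by positivity)
    (hc.continuousOn.integrableOn_compact (isCompact_closedBall 0 1))]
  have hmem : (2⁻¹ : ℝ) • e ∈ Function.support (fun y : F => |⟪e, y⟫| ^ p) ∩ ball 0 1 := by
    refine ⟨?_, ?_⟩
    · simp [real_inner_smul_right, he, (Real.rpow_pos_of_pos (by norm_num : (0 : ℝ) < 2⁻¹) p).ne']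
    · norm_num [norm_smul, he]
  exact (hc.isOpen_support.inter isOpen_ball).measure_pos volume ⟨_, hmem⟩ |>.trans_le
    (measure_mono (inter_subset_inter_right _ ball_subset_closedBall))

theorem exists_sphere_measure_integral_abs_inner_rpow [Nontrivial F] {p : ℝ} (hp : 0 < p) :
    ∃ ν : Measure (sphere (0 : F) 1), IsFiniteMeasure ν ∧
      ∀ x : F, ∫ θ : sphere (0 : F) 1, |⟪x, (θ : F)⟫| ^ p ∂ν = ‖x‖ ^ p := by
  classical
  -- `ν` is the radial projection of `‖y‖ ^ p / c dy` on the unit ball: the density turns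
  -- `|⟪x, θ⟫| ^ p` back into `|⟪x, y⟫| ^ p`, whose integral over the ball is `c * ‖x‖ ^ p`.
  obtain ⟨e, he⟩ := exists_norm_eq F zero_le_one
  set c := ∫ y in closedBall (0 : F) 1, |⟪e, y⟫| ^ p
  have hc : 0 < c := integral_closedBall_abs_inner_rpow_pos hp.le he
  -- the value at `0` is irrelevant, the density vanishes there
  let π : F → sphere (0 : F) 1 := fun y => ⟨if y = 0 then e else ‖y‖⁻¹ • y, by
    split_ifs with hy
    · simpa using he
    · simp [norm_smul, hy]⟩
  have hπ : Measurable π :=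
    (Measurable.ite (measurableSet_singleton 0) measurable_const
      (measurable_norm.inv.smul measurable_id)).subtype_mk
  set w : F → ℝ≥0 := fun y => (‖y‖ ^ p / c).toNNReal
  have hw : Continuous w :=
    continuous_real_toNNReal.comp ((continuous_norm.rpow_const fun _ => Or.inr hp.le).div_const c)
  have hfin : ∫⁻ y in closedBall (0 : F) 1, w y ≠ ∞ :=
    (setLIntegral_lt_top_of_isCompact measure_closedBall_lt_top.ne (isCompact_closedBall 0 1)
      hw).ne
  have := isFiniteMeasure_withDensity hfin
  refine ⟨((volume.restrict (closedBall (0 : F) 1)).withDensity fun y => w y).map π,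
    inferInstance, fun x => ?_⟩
  have hg : Continuous fun θ : sphere (0 : F) 1 => |⟪x, (θ : F)⟫| ^ p :=
    (continuous_abs_inner_rpow hp.le).comp ((Continuous.prodMk_right x).comp continuous_subtype_val)
  have hwπ : ∀ y, w y • |⟪x, (π y : F)⟫| ^ p = |⟪x, y⟫| ^ p / c := fun y => by
    rw [NNReal.smul_def]
    rcases eq_or_ne y 0 with rfl | hy
    · simp [w, Real.zero_rpow hp.ne']
    · simp only [π, if_neg hy, w, smul_eq_mul, real_inner_smul_right, abs_mul, abs_inv, abs_norm,
        Real.mul_rpow (inv_nonneg.2 (norm_nonneg y)) (abs_nonneg _),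
        Real.coe_toNNReal _ (div_nonneg (Real.rpow_nonneg (norm_nonneg y) p) hc.le),
        Real.inv_rpow (norm_nonneg y)]
      field_simp [(Real.rpow_pos_of_pos (norm_pos_iff.2 hy) p).ne']
  rw [integral_map hπ.aemeasurable hg.aestronglyMeasurable,
    integral_withDensity_eq_integral_smul hw.measurable]
  simp only [hwπ]
  rw [integral_div, integral_closedBall_abs_inner_rpow p he x, mul_div_cancel_right₀ _ hc.ne']

end Moments

section SymmetricConvexBody

variable {n : ℕ} {K : Set (E n)}

theorem IsSymmetricConvexBody.mem_nhds_zero (hK : IsSymmetricConvexBody K) : K ∈ 𝓝 0 :=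
  mem_interior_iff_mem_nhds.1 hK.2.2.1

theorem IsSymmetricConvexBody.volume_toReal_pos (hK : IsSymmetricConvexBody K) :
    0 < (volume K).toReal :=
  ENNReal.toReal_pos (Measure.measure_pos_of_nonempty_interior _ ⟨0, hK.2.2.1⟩).ne'
    hK.1.measure_ne_top

theorem isSymmetricConvexBody_closedBall {R : ℝ} (hR : 0 < R) :
    IsSymmetricConvexBody (closedBall (0 : E n) R) := by
  refine ⟨isCompact_closedBall _ _, convex_closedBall _ _, ?_, fun x hx => by simpa using hx⟩
  rw [interior_closedBall _ hR.ne']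
  exact mem_ball_self hR

theorem isLpBall_closedBall (hn : 0 < n) {p R : ℝ} (hp : 0 < p) (hR : 0 < R) :
    IsLpBall n p (closedBall 0 R) := by
  have : Nonempty (Fin n) := ⟨⟨0, hn⟩⟩
  obtain ⟨ν, hν, hνx⟩ := exists_sphere_measure_integral_abs_inner_rpow (F := E n) hp
  refine ⟨isSymmetricConvexBody_closedBall hR, (R ^ p)⁻¹.toNNReal • ν, inferInstance, fun x => ?_⟩
  rw [integral_smul_nnreal_measure, hνx, gauge_closedBall hR.le,
    Real.div_rpow (norm_nonneg x) hR.le, NNReal.smul_def, Real.coe_toNNReal _ (by positivity),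
    smul_eq_mul, div_eq_inv_mul]

theorem exists_isLpBall_superset (hn : 0 < n) {p : ℝ} (hp : 0 < p) (hK : IsCompact K) :
    ∃ D, K ⊆ D ∧ IsLpBall n p D := by
  obtain ⟨R, hR, hKR⟩ := hK.isBounded.subset_closedBall_lt 0 0
  exact ⟨_, hKR, isLpBall_closedBall hn hp hR⟩

theorem volume_rpow_le_of_isLpBall (hn : 0 < n) {p : ℝ} (hp : 0 < p) {M D : Set (E n)}
    {f : E n → ℝ} (hK : IsCompact K) (hM : IsCompact M) (hMD : M ⊆ D) (hD : IsLpBall n p D)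
    (hf : Continuous f) (hf0 : ∀ x, 0 ≤ f x)
    (hcomp : ∀ ξ : E n, ‖ξ‖ = 1 → (∫ x in K, |⟪x, ξ⟫| ^ p) ≤ ∫ x in M, |⟪x, ξ⟫| ^ p * f x) :
    (volume K).toReal ^ (((n : ℝ) + p) / n) ≤
      ((n : ℝ) + p) / n * (volume D).toReal ^ (p / (n : ℝ)) * ∫ x in M, f x := by
  obtain ⟨hDb, ν, hν, hDν⟩ := hD
  refine rpow_le_of_forall_sub_le ENNReal.toReal_nonneg hDb.volume_toReal_pos
    (Nat.cast_pos.2 hn) hp fun s hs => ?_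
  have h := (ofReal_le_lintegral_gauge_rpow volume (K := K) hDb.2.1 hDb.mem_nhds_zero
    hDb.1.measure_ne_top hp hs).trans
    (lintegral_gauge_rpow_le_of_moment_le hp.le hK hM hMD hf hf0 hDν hcomp)
  rw [finrank_euclideanSpace_fin] at h
  exact (ENNReal.ofReal_le_ofReal_iff (setIntegral_nonneg hM.measurableSet fun x _ => hf0 x)).1 h

end SymmetricConvexBody

/-- Corollary to Theorem 2: comparison of volume with a measure via moments. -/
theorem moment_comparison_volume {n : ℕ} (hn : 0 < n) (p : ℝ) (hp : 0 < p)
    (K M : Set (E n)) (hK : IsSymmetricConvexBody K) (hM : IsSymmetricConvexBody M)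
    (f : E n → ℝ) (hf : Continuous f) (hf0 : ∀ x, 0 ≤ f x)
    (hcomp : ∀ ξ : E n, ‖ξ‖ = 1 →
      (∫ x in K, |⟪x, ξ⟫| ^ p) ≤ ∫ x in M, |⟪x, ξ⟫| ^ p * f x) :
    (volume K).toReal ^ (((n : ℝ) + p) / n) ≤
      (((n : ℝ) + p) / n) * dovrLp n p M ^ p * (volume M).toReal ^ (p / (n : ℝ)) *
        ∫ x in M, f x := by
  have hM0 := hM.volume_toReal_pos
  obtain ⟨D₀, hMD₀, hD₀⟩ := exists_isLpBall_superset hn hp hM.1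
  have hbound : ∀ D, M ⊆ D → IsLpBall n p D → (volume K).toReal ^ (((n : ℝ) + p) / n) ≤
      ((n : ℝ) + p) / n * (((volume D).toReal / (volume M).toReal) ^ ((1 : ℝ) / n)) ^ p *
        (volume M).toReal ^ (p / (n : ℝ)) * ∫ x in M, f x := fun D hMD hD => by
    rw [← Real.rpow_mul (div_nonneg ENNReal.toReal_nonneg hM0.le), one_div_mul_eq_div,
      Real.div_rpow ENNReal.toReal_nonneg hM0.le, mul_div_assoc', div_mul_cancel₀ _ (by positivity)]
    exact volume_rpow_le_of_isLpBall hn hp hK.1 hM.1 hMD hD hf hf0 hcomp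
  set φ : ℝ → ℝ := fun r =>
    ((n : ℝ) + p) / n * r ^ p * (volume M).toReal ^ (p / (n : ℝ)) * ∫ x in M, f x
  refine le_apply_csInf_of_forall_le (φ := φ)
    (by have := hp.le; fun_prop) ⟨_, D₀, hMD₀, hD₀, rfl⟩ ⟨0, ?_⟩
    fun r ⟨D, hMD, hD, hr⟩ => hr ▸ hbound D hMD hD
  rintro _ ⟨D, -, -, rfl⟩
  positivity
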